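/- Let I = [a,b] ⊂ ℝ be a segment, and let (μ_n) and μ be Borel probability measures supported in I. Then μ_n converges to μ in the weak topology if and only if p_{μ_n}(z) converges to p_μ(z) for every z ∈ ℂ ∖ I. -/

import Mathlib

open MeasureTheory Complex Set
open scoped ENNReal NNReal

noncomputable def logEnergy (μ : Measure ℂ) : EReal :=
  ((∫⁻ p : ℂ × ℂ, ENNReal.ofReal (Real.log ‖p.1 - p.2‖) ∂(μ.prod μ) : ℝ≥0∞) : EReal)
    - ((∫⁻ p : ℂ × ℂ, ENNReal.ofReal (-Real.log ‖p.1 - p.2‖) ∂(μ.prod μ) : ℝ≥0∞) : EReal)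

noncomputable def potential (μ : Measure ℂ) (z : ℂ) : EReal :=
  ((∫⁻ w, ENNReal.ofReal (Real.log ‖w - z‖) ∂μ : ℝ≥0∞) : EReal)
    - ((∫⁻ w, ENNReal.ofReal (-Real.log ‖w - z‖) ∂μ : ℝ≥0∞) : EReal)

def SupportedIn (μ : Measure ℂ) (K : Set ℂ) : Prop := μ Kᶜ = 0

noncomputable def logCapacity (K : Set ℂ) : EReal :=
  sSup (logEnergy '' {μ : Measure ℂ | IsProbabilityMeasure μ ∧ SupportedIn μ K})

def IsEquilibriumMeasure (μ : Measure ℂ) (K : Set ℂ) : Prop :=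
  IsProbabilityMeasure μ ∧ SupportedIn μ K ∧ logEnergy μ = logCapacity K

def Irr (K : Set ℂ) : Set (Polynomial ℤ) :=
  {P | P.Monic ∧ Irreducible P ∧ 1 ≤ P.natDegree ∧
    ∀ z ∈ (P.map (Int.castRingHom ℂ)).roots, z ∈ K}

noncomputable def rootMeasure (P : Polynomial ℤ) : Measure ℂ :=
  (P.natDegree : ℝ≥0∞)⁻¹ • ((P.map (Int.castRingHom ℂ)).roots.map Measure.dirac).sum

noncomputable def Minf (K : Set ℂ) : Set (ProbabilityMeasure ℂ) :=
  ⋂ F ∈ {F : Finset (Polynomial ℤ) | ↑F ⊆ Irr K},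
    closure {ν : ProbabilityMeasure ℂ |
      ν.toMeasure ∈ convexHull ℝ≥0 (rootMeasure '' (Irr K \ ↑F))}

def HarmonicOnSet (u : ℂ → ℝ) (U : Set ℂ) : Prop :=
  ∀ z ∈ U, ContDiffAt ℝ 2 u z ∧
    fderiv ℝ (fun w => fderiv ℝ u w 1) z 1
      + fderiv ℝ (fun w => fderiv ℝ u w Complex.I) z Complex.I = 0


/-! Pushing the measures forward along the retraction `w ↦ projIcc a b (re w)` of `ℂ` onto the
segment turns both conditions into statements about integrals of continuous functions on
`[a, b]`; off `I`, `x ↦ log |x - z|` is one of them, which gives the forward direction.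

Conversely, the continuous functions on `[a, b]` whose integrals converge form a subspace, closed
because all the integrals are 1-Lipschitz in the sup norm. It contains the constants and
`x ↦ log (t - x)` for `t > b`, hence their `t`-derivatives, the resolvents `(t - x)⁻¹`, and,
differentiating again, all powers `(t - x)⁻ᵏ`. Polynomials in `(b + 1 - x)⁻¹` separate points, so
by Stone–Weierstrass the subspace is everything. -/

open Filter Topology
open scoped BoundedContinuousFunction

lemma abs_log_add_sub_log_sub_div_le {c h : ℝ} (hc : 0 < c) (hh : 0 ≤ h) :
    |Real.log (c + h) - Real.log c - h / c| ≤ h ^ 2 / c ^ 2 := by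
  have hch : 0 < c + h := by linarith
  have hq : 0 < (c + h) / c := div_pos hch hc
  rw [← Real.log_div hch.ne' hc.ne']
  have upper := Real.log_le_sub_one_of_pos hq
  have lower := Real.one_sub_inv_le_log_of_pos hq
  have e1 : (c + h) / c - 1 = h / c := by field_simp; ring
  have e2 : 1 - ((c + h) / c)⁻¹ = h / c - h ^ 2 / (c * (c + h)) := by field_simp; ring
  have e3 : h ^ 2 / (c * (c + h)) ≤ h ^ 2 / c ^ 2 := by
    gcongr
    nlinarith
  rw [abs_le]
  constructor <;> nlinarith [sq_nonneg h, div_nonneg (sq_nonneg h) (sq_nonneg c)]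

theorem HasDerivWithinAt.mem_of_isClosed_submodule {E : Type*} [NormedAddCommGroup E]
    [NormedSpace ℝ E] {M : Submodule ℝ E} (hM : IsClosed (M : Set E)) {f : ℝ → E} {f' : E}
    {t : ℝ} (hf : HasDerivWithinAt f f' (Ioi t) t) (hmem : ∀ s ∈ Ioi t, f s ∈ M) : f' ∈ M := by
  have h := range_derivWithin_subset_closure_span_image f (s := Ioi t) (t := Ioi t)
    (by simp) ⟨t, rfl⟩
  rw [hf.derivWithin (uniqueDiffWithinAt_Ioi t)] at h
  exact closure_minimal (Submodule.span_le.2 (image_subset_iff.2 hmem)) hM h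

section Density

variable {K : Set ℝ} {b : ℝ}

noncomputable def logSub (hK : ∀ x ∈ K, x ≤ b) {t : ℝ} (ht : b < t) : C(K, ℝ) :=
  ⟨fun x => Real.log (t - x),
    Continuous.log (by fun_prop) fun x => (sub_pos.2 ((hK x x.2).trans_lt ht)).ne'⟩

@[simp]
lemma logSub_apply (hK : ∀ x ∈ K, x ≤ b) {t : ℝ} (ht : b < t) (x : K) :
    logSub hK ht x = Real.log (t - x) := rfl

lemma mem_resolventSet_restrict_id (hK : ∀ x ∈ K, x ≤ b) {t : ℝ} (ht : b < t) :
    t ∈ resolventSet ℝ ((ContinuousMap.id ℝ).restrict K) := by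
  rw [spectrum.mem_resolventSet_iff, ← spectrum.notMem_iff, ContinuousMap.spectrum_eq_range]
  rintro ⟨x, rfl⟩
  exact absurd (hK x x.2) (not_le.2 ht)

lemma resolvent_restrict_id_apply (hK : ∀ x ∈ K, x ≤ b) {t : ℝ} (ht : b < t) (x : K) :
    resolvent ((ContinuousMap.id ℝ).restrict K) t x = (t - x)⁻¹ := by
  have hunit := spectrum.mem_resolventSet_iff.1 (mem_resolventSet_restrict_id hK ht)
  have h := congrArg (fun q : C(K, ℝ) => q x) (Ring.inverse_mul_cancel _ hunit)
  simp only [ContinuousMap.mul_apply, ContinuousMap.sub_apply, ContinuousMap.one_apply,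
    ContinuousMap.restrict_apply, ContinuousMap.id_apply, algebraMap_apply] at h
  rw [resolvent, eq_inv_of_mul_eq_one_left h]
  simp

-- `max s t` only makes the curve total; it agrees with `s ↦ log (s - ·)` on `Ioi t`.
lemma hasDerivWithinAt_logSub [CompactSpace K] (hK : ∀ x ∈ K, x ≤ b) {t : ℝ} (ht : b < t) :
    HasDerivWithinAt (fun s => logSub hK (lt_max_of_lt_right ht : b < max s t))
      (resolvent ((ContinuousMap.id ℝ).restrict K) t) (Ioi t) t := by
  have htb : 0 < t - b := sub_pos.2 ht
  rw [hasDerivWithinAt_iff_isLittleO]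
  refine Asymptotics.IsBigO.trans_isLittleO ?_
    ((Asymptotics.isLittleO_pow_sub_sub t one_lt_two).mono nhdsWithin_le_nhds)
  refine Asymptotics.IsBigO.of_bound ((t - b) ^ 2)⁻¹
    (eventually_nhdsWithin_of_forall fun s (hs : t < s) => ?_)
  refine (ContinuousMap.norm_le _ (by positivity)).2 fun x => ?_
  have hxt : 0 < t - x := htb.trans_le (by linarith [hK x x.2])
  have key := abs_log_add_sub_log_sub_div_le hxt (sub_nonneg.2 hs.le)
  simp only [ContinuousMap.sub_apply, ContinuousMap.smul_apply, logSub_apply,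
    resolvent_restrict_id_apply hK ht, max_eq_left hs.le, max_self, smul_eq_mul, Real.norm_eq_abs,
    norm_pow, sq_abs] at key ⊢
  calc _ = |Real.log (t - x + (s - t)) - Real.log (t - x) - (s - t) / (t - x)| := by
        ring_nf
    _ ≤ (s - t) ^ 2 / (t - x) ^ 2 := key
    _ ≤ ((t - b) ^ 2)⁻¹ * (s - t) ^ 2 := by
        rw [div_eq_inv_mul]
        gcongr
        linarith [hK x x.2]

lemma resolvent_pow_succ_mem [CompactSpace K] (hK : ∀ x ∈ K, x ≤ b) {M : Submodule ℝ C(K, ℝ)}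
    (hM : IsClosed (M : Set C(K, ℝ)))
    (hR : ∀ t, b < t → resolvent ((ContinuousMap.id ℝ).restrict K) t ∈ M) (n : ℕ) :
    ∀ t, b < t → resolvent ((ContinuousMap.id ℝ).restrict K) t ^ (n + 1) ∈ M := by
  induction n with
  | zero => simpa using hR
  | succ n ih =>
    intro t ht
    have hderiv := ((spectrum.hasDerivAt_resolvent_const_left
      (mem_resolventSet_restrict_id hK ht)).pow (n + 1)).hasDerivWithinAt (s := Ioi t)
    have hmem := hderiv.mem_of_isClosed_submodule hM fun s hs => ih s (ht.trans hs)
    have hne : -((n : ℝ) + 1) ≠ 0 := neg_ne_zero.2 n.cast_add_one_ne_zero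
    refine (M.smul_mem_iff hne).1 ?_
    convert hmem using 1
    rw [Algebra.smul_def]
    simp only [map_neg, map_add, map_natCast, map_one, add_tsub_cancel_right]
    push_cast
    ring

theorem Submodule.eq_top_of_logSub_mem [CompactSpace K] (hK : ∀ x ∈ K, x ≤ b)
    {M : Submodule ℝ C(K, ℝ)} (hM : IsClosed (M : Set C(K, ℝ))) (h1 : 1 ∈ M)
    (hlog : ∀ t (ht : b < t), logSub hK ht ∈ M) : M = ⊤ := by
  set R : ℝ → C(K, ℝ) := resolvent ((ContinuousMap.id ℝ).restrict K) with hRdef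
  have hR : ∀ t, b < t → R t ∈ M := fun t ht =>
    (hasDerivWithinAt_logSub hK ht).mem_of_isClosed_submodule hM fun s hs => by
      convert hlog s (ht.trans hs) using 2
      exact max_eq_left (le_of_lt hs)
  have ht₀ : b < b + 1 := lt_add_one b
  have hA : Subalgebra.toSubmodule (Algebra.adjoin ℝ {R (b + 1)}) ≤ M := by
    rw [Algebra.adjoin_eq_span, Submodule.span_le]
    intro q hq
    obtain ⟨_ | n, rfl⟩ := Submonoid.mem_closure_singleton.1 hq
    · simpa using h1
    · exact resolvent_pow_succ_mem hK hM hR n _ ht₀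
  have hsep : (Algebra.adjoin ℝ {R (b + 1)}).SeparatesPoints := by
    intro x y hxy
    refine ⟨_, ⟨R (b + 1), Algebra.self_mem_adjoin_singleton ℝ _, rfl⟩, ?_⟩
    simp only [hRdef, resolvent_restrict_id_apply hK ht₀, ne_eq, inv_inj, sub_right_inj]
    exact fun h => hxy (Subtype.ext h)
  rw [eq_top_iff]
  intro q _
  have hq : q ∈ closure (Algebra.adjoin ℝ {R (b + 1)} : Set C(K, ℝ)) := by
    rw [← Subalgebra.topologicalClosure_coe,
      ContinuousMap.subalgebra_topologicalClosure_eq_top_of_separatesPoints _ hsep]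
    trivial
  exact closure_minimal hA hM hq

end Density

section IntegralConvergence

variable {X : Type*} [TopologicalSpace X] [CompactSpace X] [MeasurableSpace X]
  [OpensMeasurableSpace X]

lemma ContinuousMap.integrable_of_compactSpace (q : C(X, ℝ)) (m : Measure X) [IsFiniteMeasure m] :
    Integrable q m :=
  q.continuous.integrable_of_hasCompactSupport (.of_compactSpace _)

def tendstoIntegralSubmodule (μ : ℕ → Measure X) (ν : Measure X) [∀ n, IsFiniteMeasure (μ n)]
    [IsFiniteMeasure ν] : Submodule ℝ C(X, ℝ) where
  carrier := {q | Tendsto (fun n => ∫ x, q x ∂μ n) atTop (𝓝 (∫ x, q x ∂ν))}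
  add_mem' {q r} hq hr := by
    simp only [mem_ofPred_eq, ContinuousMap.add_apply] at hq hr ⊢
    simp only [integral_add (q.integrable_of_compactSpace _) (r.integrable_of_compactSpace _)]
    exact hq.add hr
  zero_mem' := by simp
  smul_mem' c q hq := by
    simpa only [mem_ofPred_eq, ContinuousMap.smul_apply, smul_eq_mul, integral_const_mul] using
      hq.const_mul c

lemma lipschitzWith_integral (m : Measure X) [IsProbabilityMeasure m] :
    LipschitzWith 1 fun q : C(X, ℝ) => ∫ x, q x ∂m := by
  refine LipschitzWith.of_dist_le_mul fun q r => ?_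
  rw [NNReal.coe_one, one_mul, Real.dist_eq, ← Real.norm_eq_abs,
    ← integral_sub (q.integrable_of_compactSpace m) (r.integrable_of_compactSpace m)]
  simpa using norm_integral_le_of_norm_le_const (μ := m) (.of_forall fun x =>
    (dist_eq_norm (q x) (r x)).symm.trans_le (ContinuousMap.dist_apply_le_dist x))

lemma isClosed_tendstoIntegralSubmodule (μ : ℕ → Measure X) (ν : Measure X)
    [∀ n, IsProbabilityMeasure (μ n)] [IsProbabilityMeasure ν] :
    IsClosed (tendstoIntegralSubmodule μ ν : Set C(X, ℝ)) :=
  (LipschitzWith.uniformEquicontinuous _ 1 fun n => lipschitzWith_integral (μ n)).equicontinuous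
    |>.isClosed_setOfPred_tendsto (lipschitzWith_integral ν).continuous

lemma one_mem_tendstoIntegralSubmodule (μ : ℕ → Measure X) (ν : Measure X)
    [∀ n, IsProbabilityMeasure (μ n)] [IsProbabilityMeasure ν] :
    1 ∈ tendstoIntegralSubmodule μ ν := by
  simp [tendstoIntegralSubmodule]

end IntegralConvergence

theorem tendsto_integral_of_tendsto_integral_log {K : Set ℝ} [CompactSpace K] {b : ℝ}
    (hK : ∀ x ∈ K, x ≤ b) {μ : ℕ → Measure K} {ν : Measure K} [∀ n, IsProbabilityMeasure (μ n)]
    [IsProbabilityMeasure ν]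
    (hlog : ∀ t, b < t → Tendsto (fun n => ∫ x, Real.log (t - x) ∂μ n) atTop
      (𝓝 (∫ x, Real.log (t - x) ∂ν)))
    (q : C(K, ℝ)) : Tendsto (fun n => ∫ x, q x ∂μ n) atTop (𝓝 (∫ x, q x ∂ν)) := by
  have htop := Submodule.eq_top_of_logSub_mem hK (isClosed_tendstoIntegralSubmodule μ ν)
    (one_mem_tendstoIntegralSubmodule μ ν) fun t ht => hlog t ht
  exact (htop ▸ Submodule.mem_top : q ∈ tendstoIntegralSubmodule μ ν)

lemma potential_eq_integral {m : Measure ℂ} {z : ℂ}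
    (h : Integrable (fun w => Real.log ‖w - z‖) m) :
    potential m z = ∫ w, Real.log ‖w - z‖ ∂m := by
  have hneg : ∫⁻ w, ENNReal.ofReal (-Real.log ‖w - z‖) ∂m < ⊤ := h.neg.lintegral_lt_top
  rw [potential, integral_eq_lintegral_pos_part_sub_lintegral_neg_part h, EReal.coe_sub,
    EReal.coe_ennreal_toReal h.lintegral_lt_top.ne, EReal.coe_ennreal_toReal hneg.ne]

section Segment

variable {a b : ℝ}

noncomputable def segmentRetraction (hab : a ≤ b) : C(ℂ, Icc a b) :=
  ⟨fun w => projIcc a b hab w.re, continuous_projIcc.comp Complex.continuous_re⟩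

lemma ofReal_segmentRetraction (hab : a ≤ b) {w : ℂ} (hw : w ∈ ofReal '' Icc a b) :
    (segmentRetraction hab w : ℂ) = w := by
  obtain ⟨x, hx, rfl⟩ := hw
  simp [segmentRetraction, projIcc_of_mem hab hx]

lemma ae_eq_comp_segmentRetraction (hab : a ≤ b) {m : Measure ℂ}
    (hm : SupportedIn m (ofReal '' Icc a b)) {E : Type*} (g : ℂ → E) :
    g =ᵐ[m] fun w => g (segmentRetraction hab w) := by
  filter_upwards [measure_eq_zero_iff_ae_notMem.1 hm] with w hw
  rw [ofReal_segmentRetraction hab (not_notMem.1 hw)]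

lemma integral_eq_integral_map_segmentRetraction (hab : a ≤ b) {m : Measure ℂ}
    (hm : SupportedIn m (ofReal '' Icc a b)) {g : ℂ → ℝ} (hg : Continuous fun x : Icc a b => g x) :
    ∫ w, g w ∂m = ∫ x : Icc a b, g x ∂(m.map (segmentRetraction hab)) := by
  rw [integral_map (segmentRetraction hab).continuous.aemeasurable hg.aestronglyMeasurable]
  exact integral_congr_ae (ae_eq_comp_segmentRetraction hab hm g)

lemma integrable_of_supportedIn_segment (hab : a ≤ b) {m : Measure ℂ} [IsFiniteMeasure m]
    (hm : SupportedIn m (ofReal '' Icc a b)) {g : ℂ → ℝ} (hg : Continuous fun x : Icc a b => g x) :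
    Integrable g m :=
  ((integrable_map_measure hg.aestronglyMeasurable
    (segmentRetraction hab).continuous.aemeasurable).1
      (hg.integrable_of_hasCompactSupport (.of_compactSpace _))).congr
    (ae_eq_comp_segmentRetraction hab hm g).symm

lemma continuous_log_norm_ofReal_sub {z : ℂ} (hz : z ∉ ofReal '' Icc a b) :
    Continuous fun x : Icc a b => Real.log ‖(x : ℂ) - z‖ :=
  Continuous.log (by fun_prop) fun x =>
    norm_ne_zero_iff.2 (sub_ne_zero.2 fun h => hz ⟨x, x.2, h⟩)

lemma potential_eq_integral_map (hab : a ≤ b) {m : Measure ℂ} [IsFiniteMeasure m]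
    (hm : SupportedIn m (ofReal '' Icc a b)) {z : ℂ} (hz : z ∉ ofReal '' Icc a b) :
    potential m z = ∫ x : Icc a b, Real.log ‖(x : ℂ) - z‖ ∂(m.map (segmentRetraction hab)) := by
  rw [potential_eq_integral
      (integrable_of_supportedIn_segment hab hm (continuous_log_norm_ofReal_sub hz)),
    integral_eq_integral_map_segmentRetraction hab hm (continuous_log_norm_ofReal_sub hz)]

lemma ofReal_notMem_segment {t : ℝ} (ht : b < t) : (t : ℂ) ∉ ofReal '' Icc a b :=
  fun ⟨_, hx, hxt⟩ => absurd (ofReal_injective hxt ▸ hx.2) (not_le.2 ht)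

lemma potential_ofReal_eq_integral_map (hab : a ≤ b) {m : Measure ℂ} [IsFiniteMeasure m]
    (hm : SupportedIn m (ofReal '' Icc a b)) {t : ℝ} (ht : b < t) :
    potential m t = ∫ x : Icc a b, Real.log (t - x) ∂(m.map (segmentRetraction hab)) := by
  rw [potential_eq_integral_map hab hm (ofReal_notMem_segment ht)]
  congr 1
  refine integral_congr_ae (ae_of_all _ fun x => ?_)
  dsimp only
  rw [← ofReal_sub, norm_real, Real.norm_eq_abs, abs_sub_comm, abs_of_pos (by linarith [x.2.2])]

lemma tendsto_integral_iff_tendsto_integral_map (hab : a ≤ b) {μ : ℕ → Measure ℂ}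
    {ν : Measure ℂ} (hμ : ∀ n, SupportedIn (μ n) (ofReal '' Icc a b))
    (hν : SupportedIn ν (ofReal '' Icc a b)) :
    (∀ f : ℂ →ᵇ ℝ, Tendsto (fun n => ∫ z, f z ∂μ n) atTop (𝓝 (∫ z, f z ∂ν))) ↔
      ∀ q : C(Icc a b, ℝ), Tendsto (fun n => ∫ x, q x ∂(μ n).map (segmentRetraction hab))
        atTop (𝓝 (∫ x, q x ∂ν.map (segmentRetraction hab))) := by
  have hr := (segmentRetraction hab).continuous.measurable
  constructor
  · intro h q
    have hmap (m : Measure ℂ) : ∫ x, q x ∂m.map (segmentRetraction hab) =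
        ∫ w, q (segmentRetraction hab w) ∂m :=
      integral_map hr.aemeasurable q.continuous.aestronglyMeasurable
    simp only [hmap]
    simpa using h ((BoundedContinuousFunction.mkOfCompact q).compContinuous _)
  · intro h f
    have hf : Continuous fun x : Icc a b => f x := by fun_prop
    simp only [integral_eq_integral_map_segmentRetraction hab (hμ _) hf,
      integral_eq_integral_map_segmentRetraction hab hν hf]
    exact h ⟨_, hf⟩

end Segment

theorem stmt10 (a b : ℝ) (hab : a ≤ b)
    (I : Set ℂ) (hI : I = Complex.ofReal '' Set.Icc a b)
    (μ : ℕ → Measure ℂ) (ν : Measure ℂ)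
    (hμ : ∀ n, IsProbabilityMeasure (μ n) ∧ SupportedIn (μ n) I)
    (hν : IsProbabilityMeasure ν) (hνs : SupportedIn ν I) :
    (∀ f : BoundedContinuousFunction ℂ ℝ,
        Filter.Tendsto (fun n => ∫ z, f z ∂(μ n)) Filter.atTop (nhds (∫ z, f z ∂ν)))
      ↔ (∀ z : ℂ, z ∉ I →
        Filter.Tendsto (fun n => potential (μ n) z) Filter.atTop (nhds (potential ν z))) := by
  subst hI
  have hr := (segmentRetraction hab).continuous.measurable
  have : ∀ n, IsProbabilityMeasure (μ n) := fun n => (hμ n).1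
  have : ∀ n, IsProbabilityMeasure ((μ n).map (segmentRetraction hab)) := fun n =>
    Measure.isProbabilityMeasure_map hr.aemeasurable
  have : IsProbabilityMeasure (ν.map (segmentRetraction hab)) :=
    Measure.isProbabilityMeasure_map hr.aemeasurable
  rw [tendsto_integral_iff_tendsto_integral_map hab (fun n => (hμ n).2) hνs]
  constructor
  · intro h z hz
    simp only [potential_eq_integral_map hab (hμ _).2 hz, potential_eq_integral_map hab hνs hz]
    exact EReal.tendsto_coe.2 (h ⟨_, continuous_log_norm_ofReal_sub hz⟩)
  · refine fun h => tendsto_integral_of_tendsto_integral_log (fun x hx => hx.2) fun t ht => ?_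
    simpa only [potential_ofReal_eq_integral_map hab (hμ _).2 ht,
      potential_ofReal_eq_integral_map hab hνs ht, EReal.tendsto_coe] using
      h t (ofReal_notMem_segment ht)
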